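/- arXiv:2404.11231 — 5 statements merged into one kernel-verified Lean document; each statement's English description precedes it below -/
import Mathlib

section
/- Let Λ₀, Λ₁, Λ₂ be three proper sublattices of ℤ² (i.e., each of finite index greater than 1) whose union is all of ℤ². Then, up to a permutation of indices, Λ₀ = {(u,v) ∈ ℤ² : u ≡ 0 mod 2}, Λ₁ = {(u,v) ∈ ℤ² : v ≡ 0 mod 2}, and Λ₂ = {(u,v) ∈ ℤ² : u + v ≡ 0 mod 2}. -/
/-!
If three proper subgroups `A, B, C` cover an abelian group, none of them is redundant, since two
proper subgroups never cover. Taking `a ∈ A` outside `B ∪ C`, every `g ∈ B \ A` satisfies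
`g ± a ∈ C`, so `2g ∈ B ∩ C`, and `B ∩ C ⊆ A` because `x + a` escapes `B` and `C` for
`x ∈ B ∩ C`. Hence every lattice of the cover contains `2ℤ²`, and is therefore determined by which
of the odd classes `(1,0), (0,1), (1,1)` it contains. Each class lies in some lattice of the cover,
and a proper lattice containing `2ℤ²` and one odd class is the index-two lattice `latV`, `latU` or
`latS` respectively.
-/

/-- The sublattice `{(u,v) ∈ ℤ² : u ≡ 0 mod 2}`. -/
def latU : AddSubgroup (ℤ × ℤ) where
  carrier := {p | 2 ∣ p.1}
  add_mem' := fun ha hb => dvd_add ha hb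
  zero_mem' := dvd_zero 2
  neg_mem' := fun h => by simpa using h

/-- The sublattice `{(u,v) ∈ ℤ² : v ≡ 0 mod 2}`. -/
def latV : AddSubgroup (ℤ × ℤ) where
  carrier := {p | 2 ∣ p.2}
  add_mem' := fun ha hb => dvd_add ha hb
  zero_mem' := dvd_zero 2
  neg_mem' := fun h => by simpa using h

/-- The sublattice `{(u,v) ∈ ℤ² : u + v ≡ 0 mod 2}`. -/
def latS : AddSubgroup (ℤ × ℤ) where
  carrier := {p | 2 ∣ p.1 + p.2}
  add_mem' := by
    intro a b ha hb
    have h := dvd_add ha hb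
    have : (a.1 + a.2) + (b.1 + b.2) = (a + b).1 + (a + b).2 := by
      simp [Prod.fst_add, Prod.snd_add]; ring
    simpa [this] using h
  zero_mem' := by simp
  neg_mem' := by
    intro a ha
    have h : (2 : ℤ) ∣ -(a.1 + a.2) := (dvd_neg).mpr ha
    simpa [neg_add, add_comm] using h

namespace AddSubgroup

section Cover

variable {G : Type*} [AddCommGroup G] {A B C : AddSubgroup G}

theorem exists_notMem_notMem_of_ne_top (hB : B ≠ ⊤) (hC : C ≠ ⊤) : ∃ x, x ∉ B ∧ x ∉ C := by
  obtain ⟨x, hxB⟩ := SetLike.exists_not_mem_of_ne_top B hB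
  obtain ⟨y, hyC⟩ := SetLike.exists_not_mem_of_ne_top C hC
  by_cases hxC : x ∈ C
  · by_cases hyB : y ∈ B
    · exact ⟨x + y, fun h => hxB ((B.add_mem_cancel_right hyB).mp h),
        fun h => hyC ((C.add_mem_cancel_left hxC).mp h)⟩
    · exact ⟨y, hyB, hyC⟩
  · exact ⟨x, hxB, hxC⟩

theorem add_mem_of_cover (hcov : ∀ x, x ∈ A ∨ x ∈ B ∨ x ∈ C) {a g : G}
    (ha : a ∈ A) (haB : a ∉ B) (hg : g ∈ B) (hgA : g ∉ A) : g + a ∈ C :=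
  ((hcov _).resolve_left fun h => hgA ((A.add_mem_cancel_right ha).mp h)).resolve_left
    fun h => haB ((B.add_mem_cancel_left hg).mp h)

theorem inf_le_of_cover (hcov : ∀ x, x ∈ A ∨ x ∈ B ∨ x ∈ C) {a : G}
    (ha : a ∈ A) (haB : a ∉ B) (haC : a ∉ C) : B ⊓ C ≤ A := by
  intro x ⟨hxB, hxC⟩
  by_contra hxA
  exact haC ((C.add_mem_cancel_left hxC).mp (add_mem_of_cover hcov ha haB hxB hxA))

theorem two_nsmul_mem_of_cover (hcov : ∀ x, x ∈ A ∨ x ∈ B ∨ x ∈ C)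
    (hB : B ≠ ⊤) (hC : C ≠ ⊤) (g : G) : 2 • g ∈ A := by
  obtain ⟨a, haB, haC⟩ := exists_notMem_notMem_of_ne_top hB hC
  have ha : a ∈ A := (hcov a).resolve_right (not_or_intro haB haC)
  by_cases hgA : g ∈ A
  · exact nsmul_mem hgA 2
  have hsplit : 2 • g = (g + a) + (g + -a) := by abel
  apply inf_le_of_cover hcov ha haB haC
  rcases (hcov g).resolve_left hgA with hgB | hgC
  · refine ⟨nsmul_mem hgB 2, hsplit ▸ add_mem ?_ ?_⟩
    · exact add_mem_of_cover hcov ha haB hgB hgA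
    · exact add_mem_of_cover hcov (neg_mem ha) (by simpa using haB) hgB hgA
  · have hcov' : ∀ x, x ∈ A ∨ x ∈ C ∨ x ∈ B := fun x => (hcov x).imp_right Or.symm
    refine ⟨hsplit ▸ add_mem ?_ ?_, nsmul_mem hgC 2⟩
    · exact add_mem_of_cover hcov' ha haC hgC hgA
    · exact add_mem_of_cover hcov' (neg_mem ha) (by simpa using haC) hgC hgA

end Cover

theorem isCoatom_of_index_eq_two {G : Type*} [AddGroup G] {H : AddSubgroup G}
    (h : H.index = 2) : IsCoatom H := by
  obtain ⟨a, ha⟩ := index_eq_two_iff.mp h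
  refine ⟨fun htop => by simp [htop] at h, fun K hK => ?_⟩
  obtain ⟨x, hxK, hxH⟩ := SetLike.exists_of_lt hK
  have haK : a ∈ K := (K.add_mem_cancel_left hxK).mp (hK.le (((ha x).or).resolve_right hxH))
  refine (eq_top_iff' K).mpr fun b => ?_
  rcases (ha b).or with hb | hb
  · exact (K.add_mem_cancel_right haK).mp (hK.le hb)
  · exact hK.le hb

end AddSubgroup

open AddSubgroup

theorem mem_latU {p : ℤ × ℤ} : p ∈ latU ↔ 2 ∣ p.1 := Iff.rfl

theorem mem_latV {p : ℤ × ℤ} : p ∈ latV ↔ 2 ∣ p.2 := Iff.rfl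

theorem mem_latS {p : ℤ × ℤ} : p ∈ latS ↔ 2 ∣ p.1 + p.2 := Iff.rfl

theorem index_latU : latU.index = 2 :=
  index_eq_two_iff.mpr ⟨(1, 0), fun b => by simp [mem_latU, xor_iff_not_iff]; omega⟩

theorem index_latV : latV.index = 2 :=
  index_eq_two_iff.mpr ⟨(0, 1), fun b => by simp [mem_latV, xor_iff_not_iff]; omega⟩

theorem index_latS : latS.index = 2 :=
  index_eq_two_iff.mpr ⟨(1, 0), fun b => by simp [mem_latS, xor_iff_not_iff]; omega⟩

theorem mem_of_two_dvd_sub {H : AddSubgroup (ℤ × ℤ)} (h2 : ∀ g, 2 • g ∈ H) {x y : ℤ × ℤ}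
    (hy : y ∈ H) (h₁ : 2 ∣ x.1 - y.1) (h₂ : 2 ∣ x.2 - y.2) : x ∈ H := by
  obtain ⟨k, hk⟩ := h₁
  obtain ⟨l, hl⟩ := h₂
  have hx : x = 2 • (k, l) + y := by ext <;> simp <;> omega
  exact hx ▸ add_mem (h2 _) hy

theorem latU_le {H : AddSubgroup (ℤ × ℤ)} (h2 : ∀ g, 2 • g ∈ H) (h01 : ((0, 1) : ℤ × ℤ) ∈ H) :
    latU ≤ H := by
  intro x hx
  rw [mem_latU] at hx
  rcases Int.even_or_odd x.2 with ⟨l, hl⟩ | ⟨l, hl⟩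
  · exact mem_of_two_dvd_sub h2 H.zero_mem (by simpa using hx) (by simp; omega)
  · exact mem_of_two_dvd_sub h2 h01 (by simpa using hx) (by simp; omega)

theorem eq_latU_of_mem {H : AddSubgroup (ℤ × ℤ)} (hH : H ≠ ⊤) (h2 : ∀ g, 2 • g ∈ H)
    (h01 : ((0, 1) : ℤ × ℤ) ∈ H) : H = latU :=
  ((isCoatom_of_index_eq_two index_latU).le_iff.mp (latU_le h2 h01)).resolve_left hH

theorem latV_le {H : AddSubgroup (ℤ × ℤ)} (h2 : ∀ g, 2 • g ∈ H) (h10 : ((1, 0) : ℤ × ℤ) ∈ H) :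
    latV ≤ H := by
  intro x hx
  rw [mem_latV] at hx
  rcases Int.even_or_odd x.1 with ⟨k, hk⟩ | ⟨k, hk⟩
  · exact mem_of_two_dvd_sub h2 H.zero_mem (by simp; omega) (by simpa using hx)
  · exact mem_of_two_dvd_sub h2 h10 (by simp; omega) (by simpa using hx)

theorem eq_latV_of_mem {H : AddSubgroup (ℤ × ℤ)} (hH : H ≠ ⊤) (h2 : ∀ g, 2 • g ∈ H)
    (h10 : ((1, 0) : ℤ × ℤ) ∈ H) : H = latV :=
  ((isCoatom_of_index_eq_two index_latV).le_iff.mp (latV_le h2 h10)).resolve_left hH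

theorem latS_le {H : AddSubgroup (ℤ × ℤ)} (h2 : ∀ g, 2 • g ∈ H) (h11 : ((1, 1) : ℤ × ℤ) ∈ H) :
    latS ≤ H := by
  intro x hx
  rw [mem_latS] at hx
  rcases Int.even_or_odd x.1 with ⟨k, hk⟩ | ⟨k, hk⟩
  · exact mem_of_two_dvd_sub h2 H.zero_mem (by simp; omega) (by simp; omega)
  · exact mem_of_two_dvd_sub h2 h11 (by simp; omega) (by simp; omega)

theorem eq_latS_of_mem {H : AddSubgroup (ℤ × ℤ)} (hH : H ≠ ⊤) (h2 : ∀ g, 2 • g ∈ H)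
    (h11 : ((1, 1) : ℤ × ℤ) ∈ H) : H = latS :=
  ((isCoatom_of_index_eq_two index_latS).le_iff.mp (latS_le h2 h11)).resolve_left hH

theorem latU_ne_latV : latU ≠ latV := fun h => by
  simpa [mem_latU, mem_latV] using SetLike.ext_iff.mp h (1, 0)

theorem latU_ne_latS : latU ≠ latS := fun h => by
  simpa [mem_latU, mem_latS] using SetLike.ext_iff.mp h (1, 1)

theorem latV_ne_latS : latV ≠ latS := fun h => by
  simpa [mem_latV, mem_latS] using SetLike.ext_iff.mp h (1, 1)

theorem Fin.exists_perm_three_of_mem_range {α : Type*} (f : Fin 3 → α) {a b c : α}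
    (hab : a ≠ b) (hac : a ≠ c) (hbc : b ≠ c)
    (ha : a ∈ Set.range f) (hb : b ∈ Set.range f) (hc : c ∈ Set.range f) :
    ∃ e : Equiv.Perm (Fin 3), f (e 0) = a ∧ f (e 1) = b ∧ f (e 2) = c := by
  obtain ⟨i, rfl⟩ := ha
  obtain ⟨j, rfl⟩ := hb
  obtain ⟨k, rfl⟩ := hc
  have hinj : Function.Injective ![i, j, k] := by
    intro x y hxy
    fin_cases x <;> fin_cases y <;> simp_all
  exact ⟨Equiv.ofBijective _ (Finite.injective_iff_bijective.mp hinj), rfl, rfl, rfl⟩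

theorem stmt_1_general (Λ : Fin 3 → AddSubgroup (ℤ × ℤ))
    (hproper : ∀ i, Λ i ≠ ⊤)
    (hcover : (↑(Λ 0) : Set (ℤ × ℤ)) ∪ ↑(Λ 1) ∪ ↑(Λ 2) = Set.univ) :
    ∃ e : Equiv.Perm (Fin 3), Λ (e 0) = latU ∧ Λ (e 1) = latV ∧ Λ (e 2) = latS := by
  have hcov : ∀ x, x ∈ Λ 0 ∨ x ∈ Λ 1 ∨ x ∈ Λ 2 := fun x => by
    simpa [or_assoc] using (Set.eq_univ_iff_forall.mp hcover x)
  have h2 : ∀ i g, 2 • g ∈ Λ i := by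
    intro i g
    fin_cases i
    · exact two_nsmul_mem_of_cover hcov (hproper 1) (hproper 2) g
    · exact two_nsmul_mem_of_cover (fun x => (hcov x).rotate) (hproper 2) (hproper 0) g
    · exact two_nsmul_mem_of_cover (fun x => (hcov x).rotate.rotate) (hproper 0) (hproper 1) g
  have hmem : ∀ x, ∃ i, x ∈ Λ i := fun x => by
    rcases hcov x with h | h | h
    exacts [⟨0, h⟩, ⟨1, h⟩, ⟨2, h⟩]
  obtain ⟨i, hi⟩ := hmem (0, 1)
  obtain ⟨j, hj⟩ := hmem (1, 0)
  obtain ⟨k, hk⟩ := hmem (1, 1)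
  refine Fin.exists_perm_three_of_mem_range Λ latU_ne_latV latU_ne_latS latV_ne_latS
    ⟨i, ?_⟩ ⟨j, ?_⟩ ⟨k, ?_⟩
  exacts [eq_latU_of_mem (hproper i) (h2 i) hi, eq_latV_of_mem (hproper j) (h2 j) hj,
    eq_latS_of_mem (hproper k) (h2 k) hk]

/-- Three proper finite-index sublattices of `ℤ²` covering `ℤ²` are, up to
permutation, the three index-two sublattices. -/
theorem stmt_1 (Λ : Fin 3 → AddSubgroup (ℤ × ℤ))
    (hproper : ∀ i, Λ i ≠ ⊤)
    (hindex : ∀ i, (Λ i).index ≠ 0)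
    (hcover : (↑(Λ 0) : Set (ℤ × ℤ)) ∪ ↑(Λ 1) ∪ ↑(Λ 2) = Set.univ) :
    ∃ e : Equiv.Perm (Fin 3), Λ (e 0) = latU ∧ Λ (e 1) = latV ∧ Λ (e 2) = latS :=
  stmt_1_general Λ hproper hcover
end

section
/- Let f(X) ∈ ℤ[X] be a primitive polynomial of degree k ≥ 0 (i.e. the gcd of its coefficients is 1). Then the gcd of the set of values {f(a) : a ∈ ℤ} divides k!. -/
/-!
If `m` divides every value of `f`, it divides every iterated forward difference of `f`; the
`n`-th one is `n! · lc(f)`, so `m ∣ n! · lc(f)`. Subtracting `lc(f)` times the falling factorial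
`X (X - 1) ⋯ (X - n + 1)`, whose values are `n!` times binomial coefficients, lowers the degree
while keeping all values divisible by `m`; by induction `m` divides `n!` times every coefficient
of `f`, hence divides `n! · content(f) = n!`.
-/

open Polynomial

namespace Polynomial

theorem dvd_coeff_mul_factorial_of_dvd_eval {R : Type*} [CommRing R] {f : R[X]} {m : R} {n : ℕ}
    (hn : f.natDegree ≤ n) (hm : ∀ a, m ∣ f.eval a) : m ∣ f.coeff n * n.factorial := by
  have hΔ : m ∣ (fwdDiff 1)^[n] f.eval 0 := by
    rw [fwdDiff_iter_eq_sum_shift]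
    exact Finset.dvd_sum fun k _ => dvd_zsmul_of_dvd _ (hm _)
  rcases hn.lt_or_eq with hlt | rfl
  · simp [coeff_eq_zero_of_natDegree_lt hlt]
  · simpa [fwdDiff_iter_degree_eq_factorial] using hΔ

theorem factorial_dvd_descPochhammer_eval (n : ℕ) (a : ℤ) :
    (n.factorial : ℤ) ∣ (descPochhammer ℤ n).eval a := by
  rw [eval_eq_smeval, Ring.descPochhammer_eq_factorial_smul_choose, nsmul_eq_mul]
  exact dvd_mul_right _ _

theorem natDegree_sub_C_coeff_mul_le_of_monic {R : Type*} [Ring R] {f p : R[X]} {n : ℕ}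
    (hf : f.natDegree ≤ n + 1) (hp : p.Monic) (hpn : p.natDegree = n + 1) :
    (f - C (f.coeff (n + 1)) * p).natDegree ≤ n := by
  rw [natDegree_le_iff_coeff_eq_zero]
  intro k hk
  rcases (Nat.succ_le_of_lt hk).eq_or_lt with rfl | hlt
  · simp [← hpn, hp.leadingCoeff]
  · simp [coeff_eq_zero_of_natDegree_lt (hf.trans_lt hlt),
      coeff_eq_zero_of_natDegree_lt (hpn.trans_lt hlt)]

theorem C_dvd_C_factorial_mul_of_dvd_eval {n : ℕ} {f : ℤ[X]} {m : ℤ}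
    (hn : f.natDegree ≤ n) (hm : ∀ a, m ∣ f.eval a) : C m ∣ C (n.factorial : ℤ) * f := by
  induction n generalizing f with
  | zero =>
    have h0 := hm 0
    rw [eq_C_of_natDegree_eq_zero (Nat.le_zero.mp hn), eval_C] at h0
    rw [eq_C_of_natDegree_eq_zero (Nat.le_zero.mp hn), Nat.factorial_zero, Nat.cast_one, C_1,
      one_mul]
    exact _root_.map_dvd C h0
  | succ n ih =>
    set c := f.coeff (n + 1)
    set p := descPochhammer ℤ (n + 1)
    have hc : m ∣ c * (n + 1).factorial := dvd_coeff_mul_factorial_of_dvd_eval hn hm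
    have hdeg : (f - C c * p).natDegree ≤ n := natDegree_sub_C_coeff_mul_le_of_monic hn
      (monic_descPochhammer ℤ (n + 1)) (descPochhammer_natDegree ℤ (n + 1))
    have hvals : ∀ a, m ∣ (f - C c * p).eval a := fun a => by
      rw [eval_sub, eval_mul, eval_C]
      refine dvd_sub (hm a) ?_
      obtain ⟨b, hb⟩ := factorial_dvd_descPochhammer_eval (n + 1) a
      rw [hb, ← mul_assoc]
      exact hc.mul_right b
    have hsplit : C ((n + 1).factorial : ℤ) * f
        = C ((n + 1 : ℕ) : ℤ) * (C (n.factorial : ℤ) * (f - C c * p))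
          + C (c * (n + 1).factorial) * p := by
      simp only [Nat.factorial_succ, Nat.cast_mul, C_mul]
      ring
    rw [hsplit]
    exact dvd_add ((ih hdeg hvals).mul_left _) ((_root_.map_dvd C hc).mul_right _)

end Polynomial

/-- Pólya: if `f ∈ ℤ[X]` is primitive of degree `k`, then the gcd of the values
`f(a)`, `a ∈ ℤ`, divides `k!` (equivalently every common divisor of the values
divides `k!`). -/
theorem stmt_6 (f : Polynomial ℤ) (hf : f.IsPrimitive) (m : ℤ)
    (hm : ∀ a : ℤ, m ∣ f.eval a) :
    m ∣ (Nat.factorial f.natDegree : ℤ) := by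
  have h := dvd_content_iff_C_dvd.mpr (C_dvd_C_factorial_mul_of_dvd_eval le_rfl hm)
  rwa [content_C_mul, hf.content_eq_one, mul_one, Int.normalize_of_nonneg (by positivity)] at h
end

section
/- Let d ≥ 1 and let H(X,Y) ∈ ℤ[X,Y] be a primitive binary form of degree d with nonzero discriminant. Suppose there exist positive integers D, N, ν with gcd(D,N) = 1 such that D^d · H(ℤ²) = N^d · {H(x, νy) : (x,y) ∈ ℤ²} as sets of integers. Then N = 1 and D divides ν. -/
/-!
By Pólya, if `m` divides every value of `f ∈ ℤ[X]` then `m` divides `(deg f)! · c` for every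
coefficient `c` of `f`. Applied to `f(X) = H(X, y)` at a coefficient of the primitive form `H`
prime to `p`, this gives `v_p(H(ℤ, y)) ≤ v_p(d!) + d·v_p(y) < d·(1 + v_p(y))`. Since
`gcd(D, N) = 1`, the hypothesis forces `N^d ∣ H(x, 1)` for all `x`, which by the case `y = 1`
leaves no room for a prime factor of `N`. Then `D^d ∣ H(x, ν)` for all `x`, and the bound with
`y = ν` gives `v_p(D) ≤ v_p(ν)` for every prime `p`.
-/

open Nat

lemma dvd_fwdDiff_iter_apply {m : ℤ} {f : ℤ → ℤ} (hf : ∀ x, m ∣ f x) (n : ℕ) (y : ℤ) :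
    m ∣ (fwdDiff 1)^[n] f y := by
  rw [fwdDiff_iter_eq_sum_shift]
  exact Finset.dvd_sum fun k _ => by rw [smul_eq_mul]; exact (hf _).mul_left _

namespace Polynomial

lemma factorial_dvd_descPochhammer_eval_s8 (k : ℕ) (x : ℤ) :
    (k ! : ℤ) ∣ (descPochhammer ℤ k).eval x := by
  refine ⟨Ring.choose x k, ?_⟩
  rw [eval_eq_smeval, Ring.descPochhammer_eq_factorial_smul_choose, nsmul_eq_mul]

lemma dvd_factorial_natDegree_mul_leadingCoeff {m : ℤ} {f : ℤ[X]} (hf : ∀ x, m ∣ f.eval x) :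
    m ∣ f.natDegree ! * f.leadingCoeff := by
  have h := congrFun f.fwdDiff_iter_degree_eq_factorial 0
  rw [Pi.smul_apply, smul_eq_mul, mul_comm] at h
  exact h ▸ dvd_fwdDiff_iter_apply hf _ _

theorem dvd_factorial_natDegree_mul_coeff {m : ℤ} {f : ℤ[X]} (hf : ∀ x, m ∣ f.eval x) (j : ℕ) :
    m ∣ f.natDegree ! * f.coeff j := by
  induction hn : f.natDegree using Nat.strong_induction_on generalizing f with
  | _ n ih =>
  have hlc : m ∣ f.leadingCoeff * n ! :=
    mul_comm (n ! : ℤ) _ ▸ hn ▸ dvd_factorial_natDegree_mul_leadingCoeff hf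
  -- `n! ∣ descPochhammer n` on `ℤ`, so subtracting `lc · descPochhammer n` keeps `m ∣ g(x)`.
  set g := f - C f.leadingCoeff * descPochhammer ℤ n with hg
  have hgval : ∀ x, m ∣ g.eval x := fun x => by
    rw [hg, eval_sub, eval_mul, eval_C]
    exact dvd_sub (hf x) (hlc.trans (mul_dvd_mul_left _ (factorial_dvd_descPochhammer_eval_s8 n x)))
  have hgcoeff : m ∣ n ! * g.coeff j := by
    by_cases hg0 : g = 0
    · simp [hg0]
    have hf0 : f ≠ 0 := by rintro rfl; simp [hg] at hg0
    have hdeg : g.natDegree < n := by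
      refine hn ▸ natDegree_lt_natDegree hg0 (degree_sub_lt_left ?_ hf0 ?_)
      · rw [degree_C_mul (leadingCoeff_ne_zero.mpr hf0), degree_eq_natDegree hf0, hn,
          degree_eq_natDegree (monic_descPochhammer ℤ n).ne_zero, descPochhammer_natDegree]
      · rw [leadingCoeff_mul, leadingCoeff_C, (monic_descPochhammer ℤ n).leadingCoeff, mul_one]
    exact (ih _ hdeg hgval rfl).trans
      (mul_dvd_mul_right (by exact_mod_cast factorial_dvd_factorial hdeg.le) _)
  have hcoeff : (n ! : ℤ) * f.coeff j
      = n ! * g.coeff j + f.leadingCoeff * n ! * (descPochhammer ℤ n).coeff j := by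
    rw [hg, coeff_sub, coeff_C_mul]
    ring
  rw [hcoeff]
  exact dvd_add hgcoeff (hlc.mul_right _)

end Polynomial

namespace MvPolynomial

section BinaryForm

variable {R : Type*} [CommRing R] {H : MvPolynomial (Fin 2) R} {d : ℕ}

lemma eval_aeval_X_C (H : MvPolynomial (Fin 2) R) (c x : R) :
    (aeval ![Polynomial.X, Polynomial.C c] H).eval x = eval ![x, c] H := by
  rw [aeval_def, polynomial_eval_eval₂]
  congr 1
  · ext; simp
  · ext i; fin_cases i <;> simp

lemma coeff_aeval_X_C_eq_sum (H : MvPolynomial (Fin 2) R) (c : R) (j : ℕ) :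
    (aeval ![Polynomial.X, Polynomial.C c] H).coeff j
      = ∑ mo ∈ H.support with mo 0 = j, H.coeff mo * c ^ mo 1 := by
  rw [aeval_def, eval₂_eq', Polynomial.finsetSum_coeff, Finset.sum_filter]
  refine Finset.sum_congr rfl fun mo _ => ?_
  have : algebraMap R (Polynomial R) (H.coeff mo) * ∏ i, ![Polynomial.X, Polynomial.C c] i ^ mo i
      = Polynomial.C (H.coeff mo * c ^ mo 1) * Polynomial.X ^ mo 0 := by
    simp only [Fin.prod_univ_two, Matrix.cons_val_zero, Matrix.cons_val_one,
      Polynomial.algebraMap_eq, map_mul, map_pow]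
    ring
  rw [this, Polynomial.coeff_C_mul_X_pow]
  simp only [eq_comm]

lemma IsHomogeneous.add_eq_of_mem_support (hH : H.IsHomogeneous d) {mo : Fin 2 →₀ ℕ}
    (hmo : mo ∈ H.support) : mo 0 + mo 1 = d := by
  simpa [Finsupp.weight_apply, Finsupp.sum_fintype, Fin.sum_univ_two]
    using hH (mem_support_iff.mp hmo)

lemma IsHomogeneous.natDegree_aeval_X_C_le (hH : H.IsHomogeneous d) (c : R) :
    (MvPolynomial.aeval ![Polynomial.X, Polynomial.C c] H).natDegree ≤ d := by
  refine Polynomial.natDegree_le_iff_coeff_eq_zero.mpr fun j hj => ?_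
  rw [coeff_aeval_X_C_eq_sum]
  refine Finset.sum_eq_zero fun mo hmo => ?_
  obtain ⟨hsupp, rfl⟩ := Finset.mem_filter.mp hmo
  have := hH.add_eq_of_mem_support hsupp
  omega

lemma IsHomogeneous.coeff_aeval_X_C (hH : H.IsHomogeneous d) (c : R) {mo : Fin 2 →₀ ℕ}
    (hmo : mo ∈ H.support) :
    (MvPolynomial.aeval ![Polynomial.X, Polynomial.C c] H).coeff (mo 0)
      = H.coeff mo * c ^ mo 1 := by
  refine (coeff_aeval_X_C_eq_sum H c _).trans
    (Finset.sum_eq_single_of_mem mo (Finset.mem_filter.mpr ⟨hmo, rfl⟩) fun mo' hmo' hne => ?_)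
  obtain ⟨hmo', h0⟩ := Finset.mem_filter.mp hmo'
  have h1 : mo' 1 = mo 1 := by
    have := hH.add_eq_of_mem_support hmo
    have := hH.add_eq_of_mem_support hmo'
    omega
  exact absurd (Finsupp.ext fun i => by fin_cases i; exacts [h0, h1]) hne

end BinaryForm

theorem IsHomogeneous.le_padicValNat_of_pow_dvd_eval {H : MvPolynomial (Fin 2) ℤ} {d : ℕ}
    (hH : H.IsHomogeneous d) (hprim : ∀ c : ℤ, (∀ m, c ∣ H.coeff m) → IsUnit c)
    {p : ℕ} [hp : Fact p.Prime] {y : ℕ} (hy : y ≠ 0) {K : ℕ}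
    (hdvd : ∀ x : ℤ, (p : ℤ) ^ K ∣ eval ![x, (y : ℤ)] H) :
    K ≤ padicValNat p d ! + d * padicValNat p y := by
  obtain ⟨mo, hmo⟩ : ∃ mo, ¬ (p : ℤ) ∣ H.coeff mo := by
    by_contra! h
    exact (Nat.prime_iff_prime_int.mp hp.out).not_isUnit (hprim _ h)
  have hc0 : H.coeff mo ≠ 0 := fun h => hmo (h ▸ dvd_zero _)
  set f := MvPolynomial.aeval ![Polynomial.X, Polynomial.C (y : ℤ)] H
  have hf : (p : ℤ) ^ K ∣ f.natDegree ! * f.coeff (mo 0) :=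
    Polynomial.dvd_factorial_natDegree_mul_coeff (fun x => (eval_aeval_X_C H _ x).symm ▸ hdvd x) _
  have h : (p : ℤ) ^ K ∣ H.coeff mo * ((d ! * y ^ mo 1 : ℕ) : ℤ) := by
    calc (p : ℤ) ^ K ∣ f.natDegree ! * f.coeff (mo 0) := hf
      _ ∣ d ! * f.coeff (mo 0) := mul_dvd_mul_right
          (by exact_mod_cast factorial_dvd_factorial (hH.natDegree_aeval_X_C_le _)) _
      _ = _ := by rw [hH.coeff_aeval_X_C _ (mem_support_iff.mpr hc0)]; push_cast; ring
  have hne : ((d ! * y ^ mo 1 : ℕ) : ℤ) ≠ 0 := by positivity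
  rw [padicValInt_dvd_iff, or_iff_right (mul_ne_zero hc0 hne), padicValInt.mul hc0 hne,
    padicValInt.eq_zero_of_not_dvd hmo, padicValInt.of_nat,
    padicValNat.mul (factorial_ne_zero d) (pow_ne_zero _ hy), padicValNat.pow] at h
  have hj : mo 1 ≤ d := by have := hH.add_eq_of_mem_support (mem_support_iff.mpr hc0); omega
  grw [← hj]
  omega

end MvPolynomial

open MvPolynomial

theorem stmt_8_general (d : ℕ) (hd : 1 ≤ d) (H : MvPolynomial (Fin 2) ℤ)
    (hhom : H.IsHomogeneous d)
    (hprim : ∀ c : ℤ, (∀ m, c ∣ H.coeff m) → IsUnit c)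
    (D N ν : ℕ) (hD : 0 < D) (hν : 0 < ν)
    (hDN : Nat.Coprime D N)
    (hval : {z : ℤ | ∃ x y : ℤ, z = (D : ℤ) ^ d * eval ![x, y] H}
          = {z : ℤ | ∃ x y : ℤ, z = (N : ℤ) ^ d * eval ![x, (ν : ℤ) * y] H}) :
    N = 1 ∧ D ∣ ν := by
  have hd0 : d ≠ 0 := by omega
  have hN : N = 1 := by
    have hNdvd : ∀ x : ℤ, (N : ℤ) ^ d ∣ eval ![x, ((1 : ℕ) : ℤ)] H := fun x => by
      obtain ⟨x', y', h⟩ := (Set.ext_iff.mp hval _).mp ⟨x, 1, rfl⟩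
      exact (Nat.isCoprime_iff_coprime.mpr hDN.symm).pow.dvd_of_dvd_mul_left ⟨_, by simpa using h⟩
    by_contra hN
    obtain ⟨p, hp, hpN⟩ := Nat.exists_prime_and_dvd hN
    have : Fact p.Prime := ⟨hp⟩
    have h := hhom.le_padicValNat_of_pow_dvd_eval hprim one_ne_zero
      fun x => (pow_dvd_pow_of_dvd (Int.natCast_dvd_natCast.mpr hpN) d).trans (hNdvd x)
    simp only [padicValNat_one_right, mul_zero, add_zero] at h
    exact h.not_gt (padicValNat_factorial_lt_of_ne_zero p hd0)
  subst hN
  refine ⟨rfl, (Nat.factorization_prime_le_iff_dvd hD.ne' hν.ne').mp fun p hp => ?_⟩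
  have : Fact p.Prime := ⟨hp⟩
  have hDdvd : ∀ x : ℤ, (p : ℤ) ^ (d * padicValNat p D) ∣ eval ![x, (ν : ℤ)] H := fun x => by
    obtain ⟨x', y', h⟩ := (Set.ext_iff.mp hval _).mpr ⟨x, 1, rfl⟩
    rw [pow_mul']
    exact (pow_dvd_pow_of_dvd (Int.natCast_dvd_natCast.mpr pow_padicValNat_dvd) d).trans
      ⟨_, by simpa using h⟩
  have h := hhom.le_padicValNat_of_pow_dvd_eval hprim hν.ne' hDdvd
  have := padicValNat_factorial_lt_of_ne_zero p hd0
  rw [Nat.factorization_def _ hp, Nat.factorization_def _ hp]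
  refine Nat.le_of_lt_succ (Nat.lt_of_mul_lt_mul_left (a := d) ?_)
  rw [Nat.succ_eq_add_one, mul_add_one]
  omega

/-- If `H` is a primitive binary form of degree `d ≥ 1` with nonzero discriminant
(squarefree over `ℚ`) and `D^d · H(ℤ²) = N^d · {H(x, νy)}` with `gcd(D,N) = 1`,
then `N = 1` and `D ∣ ν`. -/
theorem stmt_8 (d : ℕ) (hd : 1 ≤ d) (H : MvPolynomial (Fin 2) ℤ)
    (hhom : H.IsHomogeneous d)
    (hprim : ∀ c : ℤ, (∀ m, c ∣ H.coeff m) → IsUnit c)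
    (hdisc : Squarefree (MvPolynomial.map (Int.castRingHom ℚ) H))
    (D N ν : ℕ) (hD : 0 < D) (hN : 0 < N) (hν : 0 < ν)
    (hDN : Nat.Coprime D N)
    (hval : {z : ℤ | ∃ x y : ℤ, z = (D : ℤ) ^ d * eval ![x, y] H}
          = {z : ℤ | ∃ x y : ℤ, z = (N : ℤ) ^ d * eval ![x, (ν : ℤ) * y] H}) :
    N = 1 ∧ D ∣ ν :=
  stmt_8_general d hd H hhom hprim D N ν hD hν hDN hval
end

section
/- Let f ∈ GL(2,ℚ) with canonical form f = (N/D)·[[m₁,m₂],[m₃,m₄]], where N, D ≥ 1, gcd(N,D) = 1 and gcd(m₁,m₂,m₃,m₄) = 1. Let L(f) = {(u,v) ∈ ℤ² : f(u,v) ∈ ℤ²}. Then the index of L(f) in ℤ² equals D² / gcd(D, m₁m₄ - m₂m₃). -/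
/-!
As `gcd(N, D) = 1`, an integer vector `v` lies in `L(f)` exactly when `D ∣ m v`. Writing `m` in
Smith normal form `U · diag(a₀, a₁) · C` with `U, C ∈ GL₂(ℤ)`, the factor `U` does not change this
lattice and `C` only moves it by an automorphism of `ℤ²`, so its index is that of
`{w : D ∣ aᵢ wᵢ}`, namely `∏ D / gcd(D, aᵢ)`. Primitivity of `m` makes `a₀, a₁` coprime, so the
product of the `gcd(D, aᵢ)` is `gcd(D, a₀a₁) = gcd(D, det m)`.
-/

open Matrix

/-- The inclusion of integer vectors into rational vectors. -/
def intVec : (Fin 2 → ℤ) →+ (Fin 2 → ℚ) where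
  toFun v := fun j => (v j : ℚ)
  map_zero' := by funext j; simp
  map_add' := by intro a b; funext j; simp

/-- The subgroup of `ℚ²` consisting of vectors with integer coordinates. -/
def Zlat : AddSubgroup (Fin 2 → ℚ) where
  carrier := {v | ∀ i, ∃ k : ℤ, v i = (k : ℚ)}
  zero_mem' := fun i => ⟨0, by simp⟩
  add_mem' := by
    rintro a b ha hb i
    obtain ⟨k, hk⟩ := ha i
    obtain ⟨l, hl⟩ := hb i
    exact ⟨k + l, by simp [hk, hl]⟩
  neg_mem' := by
    rintro a ha i
    obtain ⟨k, hk⟩ := ha i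
    exact ⟨-k, by simp [hk]⟩

/-- The lattice `L(γ) = {v ∈ ℤ² : γ v ∈ ℤ²}` associated with `γ ∈ GL(2,ℚ)`. -/
def Lgam (γ : Matrix (Fin 2) (Fin 2) ℚ) : AddSubgroup (Fin 2 → ℤ) :=
  AddSubgroup.comap ((Matrix.mulVecLin γ).toAddMonoidHom.comp intVec) Zlat

theorem Int.dvd_mul_right_iff_div_gcd_dvd {D : ℤ} (hD : D ≠ 0) (a x : ℤ) :
    D ∣ a * x ↔ D / D.gcd a ∣ x := by
  have hcop : IsCoprime (D / D.gcd a) (a / D.gcd a) :=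
    Int.isCoprime_iff_gcd_eq_one.2 (Int.gcd_div_gcd_div_gcd (Int.gcd_pos_of_ne_zero_left a hD))
  have hg : (D.gcd a : ℤ) ≠ 0 := by exact_mod_cast (Int.gcd_pos_of_ne_zero_left a hD).ne'
  calc D ∣ a * x ↔ D.gcd a * (D / D.gcd a) ∣ D.gcd a * (a / D.gcd a * x) := by
        rw [Int.mul_ediv_cancel' (Int.gcd_dvd_left D a), ← mul_assoc,
          Int.mul_ediv_cancel' (Int.gcd_dvd_right D a)]
    _ ↔ D / D.gcd a ∣ a / D.gcd a * x := mul_dvd_mul_iff_left hg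
    _ ↔ D / D.gcd a ∣ x := ⟨hcop.dvd_of_dvd_mul_left, fun h => h.mul_left _⟩

theorem Int.gcd_mul_right_of_gcd_eq_one (D : ℤ) {a b : ℤ} (hab : a.gcd b = 1) :
    D.gcd (a * b) = D.gcd a * D.gcd b := by
  simp only [Int.gcd, Int.natAbs_mul]
  exact Nat.Coprime.gcd_mul _ hab

theorem exists_intCast_eq_div_mul_iff_dvd {N D : ℕ} (hD : 0 < D) (hND : N.Coprime D) (x : ℤ) :
    (∃ k : ℤ, (N / D : ℚ) * x = k) ↔ (D : ℤ) ∣ x := by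
  constructor
  · rintro ⟨k, hk⟩
    have hNx : (N : ℤ) * x = D * k := by
      field_simp at hk
      exact_mod_cast hk
    exact (Nat.isCoprime_iff_coprime.2 hND.symm).dvd_of_dvd_mul_left ⟨k, hNx⟩
  · rintro ⟨y, rfl⟩
    exact ⟨N * y, by push_cast; field_simp⟩

theorem Matrix.exists_isUnit_det_mul_diagonal_mul {R ι : Type*} [CommRing R] [IsDomain R]
    [IsPrincipalIdealRing R] [Fintype ι] [DecidableEq ι] (A : Matrix ι ι R) (hA : A.det ≠ 0) :
    ∃ (U C : Matrix ι ι R) (a : ι → R),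
      IsUnit U.det ∧ IsUnit C.det ∧ A = U * diagonal a * C := by
  have hinj : Function.Injective A.mulVecLin := by
    rw [← LinearMap.ker_eq_bot, LinearMap.ker_eq_bot']
    intro v hv
    by_contra hv0
    exact hA (exists_mulVec_eq_zero_iff.mp ⟨v, hv0, hv⟩)
  let e := LinearEquiv.ofInjective A.mulVecLin hinj
  obtain ⟨b, a, ab, hab⟩ := Submodule.exists_smith_normal_form_of_rank_eq (Pi.basisFun R ι)
    e.finrank_eq.symm
  let cols : Module.Basis ι R (LinearMap.range A.mulVecLin) := (Pi.basisFun R ι).map e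
  let := (Pi.basisFun R ι).invertibleToMatrix b
  let := ab.invertibleToMatrix cols
  refine ⟨(Pi.basisFun R ι).toMatrix b, ab.toMatrix cols, a, isUnit_det_of_invertible _,
    isUnit_det_of_invertible _, ?_⟩
  ext k j
  have hcol : A k j = (cols j : ι → R) k := by simp [cols, e]
  rw [hcol, ← ab.sum_repr (cols j), mul_apply]
  simp only [mul_diagonal, Module.Basis.toMatrix_apply, Submodule.coe_sum, Submodule.coe_smul, hab,
    Finset.sum_apply, Pi.smul_apply, smul_eq_mul]
  refine Finset.sum_congr rfl fun i _ => ?_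
  simp only [Pi.basisFun_repr]
  ring

namespace Matrix

variable {ι : Type*} [Fintype ι]

def dvdLattice (D : ℤ) (A : Matrix ι ι ℤ) : AddSubgroup (ι → ℤ) :=
  (AddSubgroup.pi Set.univ fun _ => AddSubgroup.zmultiples D).comap A.mulVecLin.toAddMonoidHom

theorem mem_dvdLattice {D : ℤ} {A : Matrix ι ι ℤ} {v : ι → ℤ} :
    v ∈ A.dvdLattice D ↔ ∀ i, D ∣ (A *ᵥ v) i := by
  simp [dvdLattice, AddSubgroup.mem_pi, Int.mem_zmultiples_iff]

theorem dvd_mulVec_apply {D : ℤ} {v : ι → ℤ} (hv : ∀ i, D ∣ v i) (B : Matrix ι ι ℤ)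
    (i : ι) : D ∣ (B *ᵥ v) i :=
  Finset.dvd_sum fun j _ => (hv j).mul_left _

variable [DecidableEq ι]

theorem dvdLattice_mul_of_isUnit_det {D : ℤ} {U : Matrix ι ι ℤ} (hU : IsUnit U.det)
    (A : Matrix ι ι ℤ) : (U * A).dvdLattice D = A.dvdLattice D := by
  ext v
  simp only [mem_dvdLattice, ← mulVec_mulVec]
  refine ⟨fun h => ?_, fun h => dvd_mulVec_apply h U⟩
  rw [← one_mulVec (A *ᵥ v), ← nonsing_inv_mul U hU, ← mulVec_mulVec]
  exact dvd_mulVec_apply h U⁻¹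

theorem index_dvdLattice_mul_of_isUnit_det {D : ℤ} (A : Matrix ι ι ℤ) {C : Matrix ι ι ℤ}
    (hC : IsUnit C.det) : ((A * C).dvdLattice D).index = (A.dvdLattice D).index := by
  have hsurj : Function.Surjective C.mulVecLin.toAddMonoidHom := fun v =>
    ⟨C⁻¹ *ᵥ v, by simp [mulVec_mulVec, mul_nonsing_inv C hC]⟩
  rw [← AddSubgroup.index_comap_of_surjective (A.dvdLattice D) hsurj]
  congr 1
  ext v
  simp [mem_dvdLattice, mulVec_mulVec]

theorem index_dvdLattice_diagonal {D : ℤ} (hD : D ≠ 0) (a : ι → ℤ) :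
    ((diagonal a).dvdLattice D).index = ∏ i, D.natAbs / D.gcd (a i) := by
  have hpi : (diagonal a).dvdLattice D =
      AddSubgroup.pi Set.univ fun i => AddSubgroup.zmultiples (D / D.gcd (a i)) := by
    ext v
    simp [mem_dvdLattice, mulVec_diagonal, AddSubgroup.mem_pi, Int.mem_zmultiples_iff,
      Int.dvd_mul_right_iff_div_gcd_dvd hD]
  rw [hpi, AddSubgroup.index_pi]
  simp [Int.index_zmultiples, Int.natAbs_ediv_of_dvd (Int.gcd_dvd_left _ _)]

theorem dvd_mul_diagonal_mul_apply {g : ℤ} {a : ι → ℤ} (ha : ∀ i, g ∣ a i)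
    (U C : Matrix ι ι ℤ) (k j : ι) : g ∣ (U * diagonal a * C) k j := by
  choose a' ha' using ha
  have : diagonal a = g • diagonal a' := by
    ext i l; by_cases h : i = l <;> simp [h, ha']
  rw [this, Matrix.mul_smul, Matrix.smul_mul, smul_apply, smul_eq_mul]
  exact dvd_mul_right _ _

theorem index_dvdLattice_fin_two {D : ℤ} (hD : D ≠ 0) {A : Matrix (Fin 2) (Fin 2) ℤ}
    (hA : A.det ≠ 0) (hprim : ∀ g : ℤ, (∀ i j, g ∣ A i j) → IsUnit g) :
    (A.dvdLattice D).index = D.natAbs ^ 2 / D.gcd A.det := by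
  obtain ⟨U, C, a, hU, hC, rfl⟩ := exists_isUnit_det_mul_diagonal_mul A hA
  have hcop : (a 0).gcd (a 1) = 1 := by
    have hdvd : ∀ i, ((a 0).gcd (a 1) : ℤ) ∣ a i := by
      intro i; fin_cases i
      exacts [Int.gcd_dvd_left .., Int.gcd_dvd_right ..]
    simpa using Int.isUnit_iff_natAbs_eq.mp (hprim _ (dvd_mul_diagonal_mul_apply hdvd U C))
  have hdet : D.gcd (U * diagonal a * C).det = D.gcd (a 0 * a 1) := by
    simp [Int.gcd, Int.natAbs_mul, Int.isUnit_iff_natAbs_eq.mp hU, Int.isUnit_iff_natAbs_eq.mp hC]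
  rw [hdet, mul_assoc, dvdLattice_mul_of_isUnit_det hU, index_dvdLattice_mul_of_isUnit_det _ hC,
    index_dvdLattice_diagonal hD, Fin.prod_univ_two, Int.gcd_mul_right_of_gcd_eq_one D hcop,
    Nat.div_mul_div_comm (Int.gcd_dvd_natAbs_left ..) (Int.gcd_dvd_natAbs_left ..), sq]

end Matrix

theorem Lgam_div_smul_map_intCast {N D : ℕ} (hD : 0 < D) (hND : N.Coprime D)
    (m : Matrix (Fin 2) (Fin 2) ℤ) :
    Lgam (((N : ℚ) / D) • m.map (Int.cast : ℤ → ℚ)) = m.dvdLattice D := by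
  ext v
  have hval : ∀ i, ((((N : ℚ) / D) • m.map (Int.cast : ℤ → ℚ)) *ᵥ intVec v) i =
      N / D * ((m *ᵥ v) i : ℚ) := by
    intro i
    rw [smul_mulVec, Pi.smul_apply, smul_eq_mul]
    exact congrArg _ ((Int.castRingHom ℚ).map_mulVec m v i).symm
  rw [Lgam, AddSubgroup.mem_comap, mem_dvdLattice]
  refine forall_congr' fun i => ?_
  rw [← exists_intCast_eq_div_mul_iff_dvd hD hND, ← hval]
  rfl

theorem stmt_10_general (N D : ℕ) (hD : 0 < D) (hND : Nat.Coprime N D)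
    (m : Matrix (Fin 2) (Fin 2) ℤ)
    (hgcd : Int.gcd (Int.gcd (m 0 0) (m 0 1)) (Int.gcd (m 1 0) (m 1 1)) = 1)
    (f : Matrix (Fin 2) (Fin 2) ℚ)
    (hf : f = ((N : ℚ) / (D : ℚ)) • (m.map (Int.cast : ℤ → ℚ)))
    (hdet : f.det ≠ 0) :
    (Lgam f).index = D ^ 2 / Nat.gcd D (m 0 0 * m 1 1 - m 0 1 * m 1 0).natAbs := by
  have hm : m.det ≠ 0 := by
    rintro hm
    apply hdet
    have hcast : (m.map (Int.cast : ℤ → ℚ)).det = m.det :=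
      ((Int.castRingHom ℚ).map_det m).symm
    rw [hf, det_smul, hcast, hm]
    simp
  have hprim : ∀ g : ℤ, (∀ i j, g ∣ m i j) → IsUnit g := fun g hg => by
    refine isUnit_of_dvd_one ?_
    rw [← Int.natCast_one, ← hgcd]
    exact Int.dvd_coe_gcd (Int.dvd_coe_gcd (hg 0 0) (hg 0 1)) (Int.dvd_coe_gcd (hg 1 0) (hg 1 1))
  rw [hf, Lgam_div_smul_map_intCast hD hND, index_dvdLattice_fin_two (by omega) hm hprim,
    det_fin_two]
  rfl

/-- Index formula: if `f = (N/D)·m` is the canonical form of `f ∈ GL(2,ℚ)`, then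
`[ℤ² : L(f)] = D² / gcd(D, m₁m₄ - m₂m₃)`. -/
theorem stmt_10 (N D : ℕ) (hN : 0 < N) (hD : 0 < D) (hND : Nat.Coprime N D)
    (m : Matrix (Fin 2) (Fin 2) ℤ)
    (hgcd : Int.gcd (Int.gcd (m 0 0) (m 0 1)) (Int.gcd (m 1 0) (m 1 1)) = 1)
    (f : Matrix (Fin 2) (Fin 2) ℚ)
    (hf : f = ((N : ℚ) / (D : ℚ)) • (m.map (Int.cast : ℤ → ℚ)))
    (hdet : f.det ≠ 0) :
    (Lgam f).index = D ^ 2 / Nat.gcd D (m 0 0 * m 1 1 - m 0 1 * m 1 0).natAbs :=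
  stmt_10_general N D hD hND m hgcd f hf hdet
end

section
/- Let F ∈ ℤ[X,Y] be a binary form of degree d ≥ 3 with nonzero discriminant, and suppose σ ∈ Aut(F,ℤ) has order 3 and is conjugate in GL(2,ℤ) to R = [[0,1],[-1,-1]]. Then the value sets of F(X,Y) and of G₁(X,Y) := F(2X,Y) over ℤ² are equal: F(ℤ²) = {F(2x,y) : (x,y) ∈ ℤ²}. -/
/-!
Modulo 2 the matrix `R = [[0,1],[-1,-1]]` permutes the three nonzero vectors of `𝔽₂²` cyclically,
and so does its conjugate `σ`. Hence for every `v ∈ ℤ²` one of `v, σv, σ²v` has even first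
coordinate `2x`, and since `σ` preserves `F`, the value `F(v)` equals `F(2x, y)` for some `y`.
-/

open MvPolynomial

/-- Composition of an integral binary form with an integer matrix:
`(F ∘ γ)(X,Y) = F(aX + bY, cX + dY)` for `γ = [[a,b],[c,d]]`. -/
noncomputable def compZ (F : MvPolynomial (Fin 2) ℤ) (γ : Matrix (Fin 2) (Fin 2) ℤ) :
    MvPolynomial (Fin 2) ℤ :=
  aeval (fun i => C (γ i 0) * X 0 + C (γ i 1) * X 1) F

open scoped Matrix

lemma eval_compZ (F : MvPolynomial (Fin 2) ℤ) (γ : Matrix (Fin 2) (Fin 2) ℤ) (v : Fin 2 → ℤ) :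
    eval v (compZ F γ) = eval (γ *ᵥ v) F := by
  rw [compZ, ← coe_aeval_eq_eval, RingHom.coe_coe, comp_aeval_apply, ← coe_aeval_eq_eval,
    RingHom.coe_coe]
  congr 2
  funext i
  simp [Matrix.mulVec, dotProduct, Fin.sum_univ_two]

lemma eval_pow_mulVec_of_compZ_eq {F : MvPolynomial (Fin 2) ℤ} {σ : Matrix (Fin 2) (Fin 2) ℤ}
    (hσ : compZ F σ = F) (k : ℕ) (v : Fin 2 → ℤ) : eval (σ ^ k *ᵥ v) F = eval v F := by
  induction k with
  | zero => simp
  | succ k ih => rw [pow_succ', ← Matrix.mulVec_mulVec, ← eval_compZ, hσ, ih]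

lemma exists_pow_mulVec_apply_zero_eq_zero_of_conj (T S : Matrix (Fin 2) (Fin 2) (ZMod 2))
    (hT : T.det = 1) (hTS : T * S = !![0, 1; 1, 1] * T) (w : Fin 2 → ZMod 2) :
    ∃ k < 3, (S ^ k *ᵥ w) 0 = 0 := by
  revert T S w
  decide

lemma exists_even_pow_mulVec_apply_zero_of_conj {σ T : Matrix (Fin 2) (Fin 2) ℤ}
    (hT : T.det = 1 ∨ T.det = -1) (hσ : σ = T⁻¹ * !![0, 1; -1, -1] * T) (v : Fin 2 → ℤ) :
    ∃ k < 3, Even ((σ ^ k *ᵥ v) 0) := by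
  have hTσ : T * σ = !![0, 1; -1, -1] * T := by
    have hTu : IsUnit T.det := by rcases hT with h | h <;> simp [h]
    rw [hσ, ← mul_assoc, ← mul_assoc, Matrix.mul_nonsing_inv T hTu, one_mul]
  let f := Int.castRingHom (ZMod 2)
  have hdet : (T.map f).det = 1 := by
    rw [← RingHom.mapMatrix_apply, ← RingHom.map_det]
    rcases hT with h | h <;> rw [h] <;> decide
  have hconj : T.map f * σ.map f = !![0, 1; 1, 1] * T.map f := by
    rw [← Matrix.map_mul, hTσ, Matrix.map_mul]
    congr 1
    ext i j; fin_cases i <;> fin_cases j <;> rfl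
  obtain ⟨k, hk, hzero⟩ :=
    exists_pow_mulVec_apply_zero_eq_zero_of_conj _ _ hdet hconj (f ∘ v)
  rw [← Matrix.map_pow, ← RingHom.map_mulVec] at hzero
  exact ⟨k, hk, ZMod.intCast_eq_zero_iff_even.mp hzero⟩

theorem stmt_18_general (F : MvPolynomial (Fin 2) ℤ)
    (σ : Matrix (Fin 2) (Fin 2) ℤ)
    (hσAut : compZ F σ = F)
    (hconj : ∃ T : Matrix (Fin 2) (Fin 2) ℤ, (T.det = 1 ∨ T.det = -1) ∧
      σ = T⁻¹ * !![0, 1; -1, -1] * T) :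
    {z : ℤ | ∃ x y : ℤ, eval ![x, y] F = z}
      = {z : ℤ | ∃ x y : ℤ, eval ![2 * x, y] F = z} := by
  obtain ⟨T, hT, hσT⟩ := hconj
  ext z
  constructor
  · rintro ⟨m, n, rfl⟩
    obtain ⟨k, -, x, hx⟩ := exists_even_pow_mulVec_apply_zero_of_conj hT hσT ![m, n]
    set w := σ ^ k *ᵥ ![m, n]
    have hw : ![w 0, w 1] = w := by funext i; fin_cases i <;> rfl
    exact ⟨x, w 1, by rw [two_mul, ← hx, hw, eval_pow_mulVec_of_compZ_eq hσAut]⟩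
  · rintro ⟨x, y, rfl⟩
    exact ⟨2 * x, y, rfl⟩

/-- If `F ∈ Bin(d,ℤ)`, `d ≥ 3`, has an automorphism `σ` of order 3 which is
`GL(2,ℤ)`-conjugate to `R = [[0,1],[-1,-1]]`, then `F(X,Y)` and `F(2X,Y)` have
the same value set over `ℤ²`. -/
theorem stmt_18 (d : ℕ) (hd : 3 ≤ d) (F : MvPolynomial (Fin 2) ℤ)
    (hF : F.IsHomogeneous d)
    (hdisc : Squarefree (MvPolynomial.map (Int.castRingHom ℚ) F))
    (σ : Matrix (Fin 2) (Fin 2) ℤ)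
    (hσAut : compZ F σ = F)
    (hσ3 : σ ^ 3 = 1) (hσ1 : σ ≠ 1)
    (hconj : ∃ T : Matrix (Fin 2) (Fin 2) ℤ, (T.det = 1 ∨ T.det = -1) ∧
      σ = T⁻¹ * !![0, 1; -1, -1] * T) :
    {z : ℤ | ∃ x y : ℤ, eval ![x, y] F = z}
      = {z : ℤ | ∃ x y : ℤ, eval ![2 * x, y] F = z} :=
  stmt_18_general F σ hσAut hconj
end
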